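/- Let 𝓑 = 𝓑_1 ∪ ⋯ ∪ 𝓑_q be a partition of 𝓑 into nonempty parts and let B_i ∈ 𝓑_i for i = 1,…,q. Then for every measure * ∈ {B, BA, TA, C, BC, L}, OPT_*(𝓑) ≥ Σ_{i=1}^{q} min{ price_*(B_i, B) : B ∈ 𝓑 \ 𝓑_i }. -/

import Mathlib

open Finset

variable {V : Type*} [Fintype V] [DecidableEq V]

/-- A pure Horn CNF is a finite set of clauses `(B, v)`: body `B`, head `v`,
with `B` nonempty and `v ∉ B`. -/
def PureHorn (Φ : Finset (Finset V × V)) : Prop :=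
  ∀ c ∈ Φ, c.1.Nonempty ∧ c.2 ∉ c.1

/-- A set `W` is closed under the clauses of `Φ`. -/
def HornClosed (Φ : Finset (Finset V × V)) (W : Set V) : Prop :=
  ∀ c ∈ Φ, ↑c.1 ⊆ W → c.2 ∈ W

/-- Forward-chaining closure `F_Φ(Z)`: the smallest set containing `Z`
that is closed under the clauses of `Φ`. -/
def hornClosure (Φ : Finset (Finset V × V)) (Z : Set V) : Set V :=
  ⋂₀ {W : Set V | Z ⊆ W ∧ HornClosed Φ W}

/-- `Ψ_𝓑 = ⋀_{B ∈ 𝓑} B → (V \ B)`. -/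
def keyCNF (𝓑 : Finset (Finset V)) : Finset (Finset V × V) :=
  𝓑.biUnion fun B => (Finset.univ \ B).image fun v => (B, v)

/-- `Φ` represents the key Horn function `h_𝓑`, i.e. `Φ` is a pure Horn CNF
equivalent to `Ψ_𝓑`. -/
def Represents (𝓑 : Finset (Finset V)) (Φ : Finset (Finset V × V)) : Prop :=
  PureHorn Φ ∧ ∀ Z : Finset V, hornClosure Φ ↑Z = hornClosure (keyCNF 𝓑) ↑Z

/-- (B) number of (distinct) bodies. -/
def sizeB (Φ : Finset (Finset V × V)) : ℕ := (Φ.image Prod.fst).card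
/-- (BA) body area `Σ_i |B_i|` over the distinct bodies. -/
def sizeBA (Φ : Finset (Finset V × V)) : ℕ := ∑ B ∈ Φ.image Prod.fst, B.card
/-- (C) number of clauses `Σ_i |H_i|`. -/
def sizeC (Φ : Finset (Finset V × V)) : ℕ := Φ.card
/-- (TA) total area `Σ_i (|B_i| + |H_i|)`. -/
def sizeTA (Φ : Finset (Finset V × V)) : ℕ := sizeBA Φ + sizeC Φ
/-- (BC) bodies plus clauses `Σ_i (|H_i| + 1)`. -/
def sizeBC (Φ : Finset (Finset V × V)) : ℕ := sizeB Φ + sizeC Φ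
/-- (L) number of literals `Σ_i (|B_i| + 1)·|H_i|`. -/
def sizeL (Φ : Finset (Finset V × V)) : ℕ := ∑ c ∈ Φ, (c.1.card + 1)

/-- `μ` is one of the six size measures. -/
def IsMeasure (μ : Finset (Finset V × V) → ℕ) : Prop :=
  μ = sizeB ∨ μ = sizeBA ∨ μ = sizeTA ∨ μ = sizeC ∨ μ = sizeBC ∨ μ = sizeL

/-- `OPT_μ(𝓑)`: minimum `μ`-size of a CNF representing `h_𝓑`. -/
noncomputable def OPT (μ : Finset (Finset V × V) → ℕ) (𝓑 : Finset (Finset V)) : ℕ :=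
  sInf {s : ℕ | ∃ Φ : Finset (Finset V × V), Represents 𝓑 Φ ∧ μ Φ = s}

/-- `price_μ(S,T)`: minimum `μ`-size of a pure Horn CNF with bodies in `𝓑`
whose forward chaining from `S` reaches all of `T`. -/
noncomputable def price (μ : Finset (Finset V × V) → ℕ) (𝓑 : Finset (Finset V))
    (S T : Finset V) : ℕ :=
  sInf {s : ℕ | ∃ Φ : Finset (Finset V × V),
    PureHorn Φ ∧ (∀ c ∈ Φ, c.1 ∈ 𝓑) ∧ ↑T ⊆ hornClosure Φ ↑S ∧ μ Φ = s}

/-!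
Shrink every body of a representation `Φ` of `h_𝓑` to a member of `𝓑` inside it; one exists,
since a set containing no member of `𝓑` is closed under `h_𝓑`. Forward chaining only gets
stronger, and none of the six measures grows. Now split the clauses by the part `𝓑_i` their body
lies in. Chaining from `B_i` reaches all of `V`, so the clauses with bodies in `𝓑_i` alone reach
some `B ∉ 𝓑_i` (otherwise their closure of `B_i` would be closed under every clause); hence part
`i` costs at least `price(B_i, B)`, and the parts are disjoint.
-/

set_option linter.unusedSectionVars false

open Function

theorem subset_hornClosure (Φ : Finset (Finset V × V)) (Z : Set V) : Z ⊆ hornClosure Φ Z :=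
  fun _ hv => Set.mem_sInter.2 fun _ hW => hW.1 hv

theorem hornClosed_hornClosure (Φ : Finset (Finset V × V)) (Z : Set V) :
    HornClosed Φ (hornClosure Φ Z) := fun c hc hsub =>
  Set.mem_sInter.2 fun _ hW => hW.2 c hc (hsub.trans (Set.sInter_subset_of_mem hW))

theorem hornClosure_subset {Φ : Finset (Finset V × V)} {Z W : Set V}
    (hZ : Z ⊆ W) (hW : HornClosed Φ W) : hornClosure Φ Z ⊆ W :=
  Set.sInter_subset_of_mem ⟨hZ, hW⟩

theorem mem_keyCNF {𝓑 : Finset (Finset V)} {c : Finset V × V} :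
    c ∈ keyCNF 𝓑 ↔ c.1 ∈ 𝓑 ∧ c.2 ∉ c.1 := by
  obtain ⟨B, v⟩ := c
  simp [keyCNF]

theorem pureHorn_keyCNF {𝓑 : Finset (Finset V)} (hne : ∀ B ∈ 𝓑, B.Nonempty) :
    PureHorn (keyCNF 𝓑) := fun _ hc =>
  have hc := mem_keyCNF.1 hc
  ⟨hne _ hc.1, hc.2⟩

theorem hornClosure_keyCNF_of_mem {𝓑 : Finset (Finset V)} {B : Finset V} (hB : B ∈ 𝓑) :
    hornClosure (keyCNF 𝓑) ↑B = Set.univ := by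
  refine Set.eq_univ_of_forall fun v => ?_
  by_cases hv : v ∈ B
  · exact subset_hornClosure _ _ hv
  · exact hornClosed_hornClosure _ _ (B, v) (mem_keyCNF.2 ⟨hB, hv⟩) (subset_hornClosure _ _)

theorem hornClosure_keyCNF_of_forall_not_subset {𝓑 : Finset (Finset V)} {Z : Finset V}
    (hZ : ∀ B ∈ 𝓑, ¬B ⊆ Z) : hornClosure (keyCNF 𝓑) ↑Z = ↑Z :=
  (hornClosure_subset subset_rfl fun c hc hsub =>
    absurd (Finset.coe_subset.1 hsub) (hZ c.1 (mem_keyCNF.1 hc).1)).antisymm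
    (subset_hornClosure _ _)

namespace Represents

variable {𝓑 : Finset (Finset V)} {Φ : Finset (Finset V × V)}

theorem hornClosure_eq_univ (hΦ : Represents 𝓑 Φ) {B : Finset V} (hB : B ∈ 𝓑) :
    hornClosure Φ ↑B = Set.univ := by
  rw [hΦ.2, hornClosure_keyCNF_of_mem hB]

/-- If a body `B` contained no member of `𝓑`, then `B` would be closed under `Ψ_𝓑`, yet
forward chaining through the clause `B → v` leaves `B`. -/
theorem exists_mem_subset_body (hΦ : Represents 𝓑 Φ) {c : Finset V × V} (hc : c ∈ Φ) :
    ∃ B ∈ 𝓑, B ⊆ c.1 := by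
  by_contra! h
  have hhead := hornClosed_hornClosure Φ ↑c.1 c hc (subset_hornClosure _ _)
  rw [hΦ.2, hornClosure_keyCNF_of_forall_not_subset h] at hhead
  exact (hΦ.1 c hc).2 hhead

theorem exists_shrink_bodies (hΦ : Represents 𝓑 Φ) :
    ∃ r : Finset V → Finset V, ∀ c ∈ Φ, r c.1 ∈ 𝓑 ∧ r c.1 ⊆ c.1 := by
  have h : ∀ B ∈ Φ.image Prod.fst, ∃ B' ∈ 𝓑, B' ⊆ B := fun _ hB => by
    obtain ⟨c, hc, rfl⟩ := Finset.mem_image.1 hB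
    exact hΦ.exists_mem_subset_body hc
  choose! r hr𝓑 hrsub using h
  exact ⟨r, fun c hc =>
    ⟨hr𝓑 _ (Finset.mem_image_of_mem _ hc), hrsub _ (Finset.mem_image_of_mem _ hc)⟩⟩

end Represents

/-- Each of the six size measures has this shape: a monotone weight `f` per distinct body plus a
monotone weight `g` (of the body) per clause. -/
def bodyClauseSum (f g : Finset V → ℕ) (Φ : Finset (Finset V × V)) : ℕ :=
  ∑ B ∈ Φ.image Prod.fst, f B + ∑ c ∈ Φ, g c.1

theorem IsMeasure.exists_eq_bodyClauseSum {μ : Finset (Finset V × V) → ℕ} (hμ : IsMeasure μ) :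
    ∃ f g : Finset V → ℕ, Monotone f ∧ Monotone g ∧ μ = bodyClauseSum f g := by
  have hcard : Monotone (Finset.card : Finset V → ℕ) := fun _ _ => Finset.card_le_card
  rcases hμ with rfl | rfl | rfl | rfl | rfl | rfl
  · exact ⟨1, 0, monotone_const, monotone_const, by ext; simp [bodyClauseSum, sizeB]⟩
  · exact ⟨card, 0, hcard, monotone_const, by ext; simp [bodyClauseSum, sizeBA]⟩
  · exact ⟨card, 1, hcard, monotone_const,
      by ext; simp [bodyClauseSum, sizeTA, sizeBA, sizeC]⟩
  · exact ⟨0, 1, monotone_const, monotone_const, by ext; simp [bodyClauseSum, sizeC]⟩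
  · exact ⟨1, 1, monotone_const, monotone_const,
      by ext; simp [bodyClauseSum, sizeBC, sizeB, sizeC]⟩
  · exact ⟨0, fun B => B.card + 1, monotone_const, fun _ _ h => by simpa using hcard h,
      by ext; simp [bodyClauseSum, sizeL]⟩

theorem sum_sum_filter_le {ι α β : Type*} [Fintype ι] [DecidableEq α] [DecidableEq β] (s : Finset α)
    (k : α → β) {P : ι → Finset β} (hP : Pairwise (Disjoint on P)) (w : α → ℕ) :
    ∑ i, ∑ a ∈ s.filter (fun a => k a ∈ P i), w a ≤ ∑ a ∈ s, w a := by
  have hdisj : (↑(Finset.univ : Finset ι) : Set ι).PairwiseDisjoint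
      fun i => s.filter fun a => k a ∈ P i :=
    fun i _ j _ hij => Finset.disjoint_filter_filter' _ _ fun _ hi hj a ha =>
      Finset.disjoint_left.1 (hP hij) (hi a ha) (hj a ha)
  rw [← Finset.sum_biUnion hdisj]
  exact Finset.sum_le_sum_of_subset (Finset.biUnion_subset.2 fun _ _ => Finset.filter_subset _ _)

theorem sum_bodyClauseSum_filter_le {ι : Type*} [Fintype ι] (f g : Finset V → ℕ)
    (Φ : Finset (Finset V × V)) {P : ι → Finset (Finset V)} (hP : Pairwise (Disjoint on P)) :
    ∑ i, bodyClauseSum f g (Φ.filter fun c => c.1 ∈ P i) ≤ bodyClauseSum f g Φ := by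
  have hbodies : ∀ i, (Φ.filter fun c => c.1 ∈ P i).image Prod.fst =
      (Φ.image Prod.fst).filter fun B => id B ∈ P i := fun _ => by rw [Finset.filter_image]; rfl
  simp only [bodyClauseSum, Finset.sum_add_distrib, hbodies]
  exact add_le_add (sum_sum_filter_le _ id hP f) (sum_sum_filter_le _ Prod.fst hP _)

def shrinkBodies (r : Finset V → Finset V) (Φ : Finset (Finset V × V)) :
    Finset (Finset V × V) :=
  Φ.image fun c => (r c.1, c.2)

section shrinkBodies

variable {r : Finset V → Finset V} {Φ : Finset (Finset V × V)}

theorem hornClosure_subset_hornClosure_shrinkBodies (hr : ∀ c ∈ Φ, r c.1 ⊆ c.1) (Z : Set V) :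
    hornClosure Φ Z ⊆ hornClosure (shrinkBodies r Φ) Z :=
  hornClosure_subset (subset_hornClosure _ _) fun c hc hsub =>
    hornClosed_hornClosure _ Z (r c.1, c.2) (Finset.mem_image_of_mem _ hc)
      ((Finset.coe_subset.2 (hr c hc)).trans hsub)

theorem mem_of_mem_shrinkBodies {𝓑 : Finset (Finset V)} (hr : ∀ c ∈ Φ, r c.1 ∈ 𝓑) :
    ∀ c ∈ shrinkBodies r Φ, c.1 ∈ 𝓑 := fun _ hc' => by
  obtain ⟨c, hc, rfl⟩ := Finset.mem_image.1 hc'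
  exact hr c hc

theorem pureHorn_shrinkBodies (hΦ : PureHorn Φ) (hr : ∀ c ∈ Φ, r c.1 ⊆ c.1)
    (hne : ∀ c ∈ Φ, (r c.1).Nonempty) : PureHorn (shrinkBodies r Φ) := fun _ hc' => by
  obtain ⟨c, hc, rfl⟩ := Finset.mem_image.1 hc'
  exact ⟨hne c hc, fun h => (hΦ c hc).2 (hr c hc h)⟩

/-- Distinct bodies are never split, as `r` is a function of the body alone. -/
theorem bodyClauseSum_shrinkBodies_le {f g : Finset V → ℕ} (hf : Monotone f) (hg : Monotone g)
    (hr : ∀ c ∈ Φ, r c.1 ⊆ c.1) :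
    bodyClauseSum f g (shrinkBodies r Φ) ≤ bodyClauseSum f g Φ := by
  have hbodies : (shrinkBodies r Φ).image Prod.fst = (Φ.image Prod.fst).image r := by
    simp only [shrinkBodies, Finset.image_image]
    rfl
  rw [bodyClauseSum, bodyClauseSum, hbodies]
  refine add_le_add ?_ ?_
  · calc ∑ B ∈ (Φ.image Prod.fst).image r, f B
        ≤ ∑ B ∈ Φ.image Prod.fst, f (r B) := Finset.sum_image_le_of_nonneg fun _ _ => Nat.zero_le _
      _ ≤ ∑ B ∈ Φ.image Prod.fst, f B := by
        refine Finset.sum_le_sum fun _ hB => ?_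
        obtain ⟨c, hc, rfl⟩ := Finset.mem_image.1 hB
        exact hf (hr c hc)
  · calc ∑ c ∈ shrinkBodies r Φ, g c.1
        ≤ ∑ c ∈ Φ, g (r c.1) := Finset.sum_image_le_of_nonneg fun _ _ => Nat.zero_le _
      _ ≤ ∑ c ∈ Φ, g c.1 := Finset.sum_le_sum fun c hc => hg (hr c hc)

end shrinkBodies

/-- Otherwise the closure of `S` under the clauses with bodies in `P` is closed under all of `Φ`. -/
theorem exists_mem_sdiff_subset_hornClosure_filter {𝓑 P : Finset (Finset V)}
    {Φ : Finset (Finset V × V)} {S : Set V} (hbody : ∀ c ∈ Φ, c.1 ∈ 𝓑)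
    (hS : hornClosure Φ S = Set.univ) (hP : (𝓑 \ P).Nonempty) :
    ∃ B ∈ 𝓑 \ P, ↑B ⊆ hornClosure (Φ.filter fun c => c.1 ∈ P) S := by
  by_contra! h
  have hclosed : HornClosed Φ (hornClosure (Φ.filter fun c => c.1 ∈ P) S) := by
    intro c hc hsub
    by_cases hcP : c.1 ∈ P
    · exact hornClosed_hornClosure _ S c (Finset.mem_filter.2 ⟨hc, hcP⟩) hsub
    · exact absurd hsub (h c.1 (Finset.mem_sdiff.2 ⟨hbody c hc, hcP⟩))
  obtain ⟨B, hB⟩ := hP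
  exact h B hB <| (Set.subset_univ _).trans <|
    hS.symm.subset.trans (hornClosure_subset (subset_hornClosure _ _) hclosed)

theorem price_le {𝓑 : Finset (Finset V)} {Φ : Finset (Finset V × V)} {S T : Finset V}
    (μ : Finset (Finset V × V) → ℕ) (hΦ : PureHorn Φ) (hbody : ∀ c ∈ Φ, c.1 ∈ 𝓑)
    (hT : ↑T ⊆ hornClosure Φ ↑S) : price μ 𝓑 S T ≤ μ Φ :=
  Nat.sInf_le ⟨Φ, hΦ, hbody, hT, rfl⟩

theorem sInf_price_le {𝓑 P : Finset (Finset V)} {Φ : Finset (Finset V × V)} {S : Finset V}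
    (μ : Finset (Finset V × V) → ℕ) (hΦ : PureHorn Φ) (hbody : ∀ c ∈ Φ, c.1 ∈ 𝓑)
    (hS : hornClosure Φ ↑S = Set.univ) :
    sInf {s : ℕ | ∃ B ∈ 𝓑 \ P, price μ 𝓑 S B = s} ≤ μ (Φ.filter fun c => c.1 ∈ P) := by
  rcases (𝓑 \ P).eq_empty_or_nonempty with hP | hP
  · simp [hP]
  obtain ⟨B, hB, hBS⟩ := exists_mem_sdiff_subset_hornClosure_filter hbody hS hP
  calc sInf {s : ℕ | ∃ B ∈ 𝓑 \ P, price μ 𝓑 S B = s} ≤ price μ 𝓑 S B := Nat.sInf_le ⟨B, hB, rfl⟩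
    _ ≤ _ := price_le μ (fun c hc => hΦ c (Finset.mem_filter.1 hc).1)
      (fun c hc => hbody c (Finset.mem_filter.1 hc).1) hBS

theorem stmt3_general {V : Type*} [Fintype V] [DecidableEq V]
    (𝓑 : Finset (Finset V))
    (hne : ∀ B ∈ 𝓑, B.Nonempty)
    (q : ℕ) (𝓟 : Fin q → Finset (Finset V)) (Bsel : Fin q → Finset V)
    (hunion : Finset.univ.biUnion 𝓟 = 𝓑)
    (hdisj : ∀ i j : Fin q, i ≠ j → Disjoint (𝓟 i) (𝓟 j))
    (hBsel : ∀ i : Fin q, Bsel i ∈ 𝓟 i)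
    (μ : Finset (Finset V × V) → ℕ) (hμ : IsMeasure μ) :
    ∑ i : Fin q, sInf {s : ℕ | ∃ B ∈ 𝓑 \ 𝓟 i, price μ 𝓑 (Bsel i) B = s} ≤
      OPT μ 𝓑 := by
  refine le_csInf ⟨_, keyCNF 𝓑, ⟨pureHorn_keyCNF hne, fun _ => rfl⟩, rfl⟩ ?_
  rintro _ ⟨Φ, hΦ, rfl⟩
  obtain ⟨f, g, hf, hg, rfl⟩ := hμ.exists_eq_bodyClauseSum
  obtain ⟨r, hr⟩ := hΦ.exists_shrink_bodies
  have hrsub : ∀ c ∈ Φ, r c.1 ⊆ c.1 := fun c hc => (hr c hc).2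
  have hpure := pureHorn_shrinkBodies hΦ.1 hrsub fun c hc => hne _ (hr c hc).1
  have hbody := mem_of_mem_shrinkBodies fun c hc => (hr c hc).1
  have hreach : ∀ i, hornClosure (shrinkBodies r Φ) ↑(Bsel i) = Set.univ := fun i =>
    have hBsel𝓑 : Bsel i ∈ 𝓑 := hunion ▸ Finset.mem_biUnion.2 ⟨i, Finset.mem_univ _, hBsel i⟩
    Set.eq_univ_of_univ_subset <| (hΦ.hornClosure_eq_univ hBsel𝓑).symm.subset.trans
      (hornClosure_subset_hornClosure_shrinkBodies hrsub _)
  calc _ ≤ ∑ i, bodyClauseSum f g ((shrinkBodies r Φ).filter fun c => c.1 ∈ 𝓟 i) :=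
        Finset.sum_le_sum fun i _ => sInf_price_le _ hpure hbody (hreach i)
    _ ≤ bodyClauseSum f g (shrinkBodies r Φ) := sum_bodyClauseSum_filter_le f g _ hdisj
    _ ≤ bodyClauseSum f g Φ := bodyClauseSum_shrinkBodies_le hf hg hrsub

/-- If `𝓑 = 𝓑_1 ∪ ⋯ ∪ 𝓑_q` is a partition with representatives
`B_i ∈ 𝓑_i`, then for each of the six measures,
`OPT_μ(𝓑) ≥ Σ_i min { price_μ(B_i, B) : B ∈ 𝓑 \ 𝓑_i }`. -/
theorem stmt3 {V : Type*} [Fintype V] [DecidableEq V]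
    (𝓑 : Finset (Finset V))
    (hne : ∀ B ∈ 𝓑, B.Nonempty) (hproper : ∀ B ∈ 𝓑, B ≠ Finset.univ)
    (hsperner : ∀ B ∈ 𝓑, ∀ B' ∈ 𝓑, B ⊆ B' → B = B')
    (hcover : ∀ v : V, ∃ B ∈ 𝓑, v ∈ B)
    (hinter : ∀ v : V, ∃ B ∈ 𝓑, v ∉ B)
    (q : ℕ) (𝓟 : Fin q → Finset (Finset V)) (Bsel : Fin q → Finset V)
    (hunion : Finset.univ.biUnion 𝓟 = 𝓑)
    (hdisj : ∀ i j : Fin q, i ≠ j → Disjoint (𝓟 i) (𝓟 j))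
    (hBsel : ∀ i : Fin q, Bsel i ∈ 𝓟 i)
    (μ : Finset (Finset V × V) → ℕ) (hμ : IsMeasure μ) :
    ∑ i : Fin q, sInf {s : ℕ | ∃ B ∈ 𝓑 \ 𝓟 i, price μ 𝓑 (Bsel i) B = s} ≤
      OPT μ 𝓑 :=
  stmt3_general 𝓑 hne q 𝓟 Bsel hunion hdisj hBsel μ hμ
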